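/- Let K ≥ 1, T ≥ 1, γ ∈ (0,1), η > 0, and let x̂_t(i) ≥ 0 for t = 1,…,T and i = 1,…,K satisfy η·x̂_t(i) ≤ 1 for all t, i. Define weights w_1(i) = 1 and w_{t+1}(i) = w_t(i)·exp(η·x̂_t(i)), and mixed probabilities p_t(i) = (1−γ)·w_t(i)/∑_{j=1}^K w_t(j) + γ/K. Then for every j ∈ {1,…,K}: ∑_{t=1}^T x̂_t(j) − ∑_{t=1}^T ∑_{i=1}^K p_t(i)·x̂_t(i) ≤ γ·∑_{t=1}^T x̂_t(j) + (e−2)·η·∑_{t=1}^T ∑_{i=1}^K p_t(i)·x̂_t(i)² + (ln K)/η. -/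

import Mathlib

/-!
With `W t = ∑ i, w t i`, the potential `log W t` starts at `log K` and ends above `η · ∑_t x̂ t j`.
Each round it grows by at most `log (W (t+1) / W t) ≤ W (t+1) / W t - 1`, which the quadratic bound
`exp z ≤ 1 + z + (e - 2) z²` on `[0, 1]` and the domination `w t i / W t ≤ p t i / (1 - γ)` bound
by `(η · ∑ p x̂ + (e - 2) η² · ∑ p x̂²) / (1 - γ)`. Telescoping and multiplying by `(1 - γ) / η`
gives the regret bound.
-/

/-- Exponential-weights weight sequence: `w 0 i = 1` and
`w (t+1) i = w t i · exp(η · x̂ t i)`. -/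
noncomputable def ewWeight (K : ℕ) (η : ℝ) (xhat : ℕ → Fin K → ℝ) :
    ℕ → Fin K → ℝ
  | 0 => fun _ => 1
  | t + 1 => fun i => ewWeight K η xhat t i * Real.exp (η * xhat t i)

/-- Mixed exponential-weights probabilities
`p t i = (1−γ)·w t i / ∑ j, w t j + γ/K`. -/
noncomputable def ewMixedProb (K : ℕ) (γ η : ℝ) (xhat : ℕ → Fin K → ℝ)
    (t : ℕ) (i : Fin K) : ℝ :=
  (1 - γ) * ewWeight K η xhat t i / (∑ j, ewWeight K η xhat t j) + γ / K

open Finset Real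
open scoped Nat

theorem Real.exp_le_one_add_add_mul_sq {z : ℝ} (h0 : 0 ≤ z) (h1 : z ≤ 1) :
    exp z ≤ 1 + z + (exp 1 - 2) * z ^ 2 := by
  have tail : ∀ x : ℝ, HasSum (fun n ↦ x ^ (n + 2) / (n + 2)!) (exp x - 1 - x) := by
    intro x
    have h := (hasSum_nat_add_iff' 2).mpr
      (exp_eq_exp_ℝ ▸ NormedSpace.expSeries_div_hasSum_exp x)
    simpa [sum_range_succ, sub_sub] using h
  have hle := hasSum_le (fun n ↦ ?_) (tail z) ((tail 1).mul_left (z ^ 2))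
  · linarith
  · rw [one_pow, mul_one_div, pow_add]
    gcongr
    exact mul_le_of_le_one_left (sq_nonneg z) (pow_le_one₀ h0 h1)

section ExpWeights

variable {K : ℕ} {γ η : ℝ} {xhat : ℕ → Fin K → ℝ}

theorem ewWeight_eq_exp_sum (t : ℕ) (i : Fin K) :
    ewWeight K η xhat t i = exp (η * ∑ s ∈ range t, xhat s i) := by
  induction t with
  | zero => simp [ewWeight]
  | succ t ih => rw [ewWeight]; dsimp only; rw [ih, ← exp_add, sum_range_succ, mul_add]

theorem ewWeight_pos (t : ℕ) (i : Fin K) : 0 < ewWeight K η xhat t i := by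
  rw [ewWeight_eq_exp_sum]
  exact exp_pos _

theorem sum_ewWeight_pos [NeZero K] (t : ℕ) : 0 < ∑ i, ewWeight K η xhat t i :=
  sum_pos (fun i _ ↦ ewWeight_pos t i) univ_nonempty

theorem sum_ewWeight_zero : ∑ i, ewWeight K η xhat 0 i = K := by
  simp [ewWeight]

theorem ewWeight_le_mul_ewMixedProb [NeZero K] (hγ0 : 0 ≤ γ) (hγ1 : γ < 1) (t : ℕ) (i : Fin K) :
    ewWeight K η xhat t i ≤ (∑ j, ewWeight K η xhat t j) / (1 - γ) * ewMixedProb K γ η xhat t i := by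
  have hW := sum_ewWeight_pos (η := η) (xhat := xhat) t
  have hγ : 0 < 1 - γ := sub_pos.mpr hγ1
  have hmix : (1 - γ) * ewWeight K η xhat t i / (∑ j, ewWeight K η xhat t j)
      ≤ ewMixedProb K γ η xhat t i :=
    le_add_of_nonneg_right (by positivity)
  rw [div_le_iff₀ hW] at hmix
  rw [div_mul_eq_mul_div, le_div_iff₀ hγ]
  linarith

theorem sum_ewWeight_succ_sub_le [NeZero K] (hγ0 : 0 ≤ γ) (hγ1 : γ < 1) (hη : 0 ≤ η) {t : ℕ}
    (hx0 : ∀ i, 0 ≤ xhat t i) (hx1 : ∀ i, η * xhat t i ≤ 1) :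
    ∑ i, ewWeight K η xhat (t + 1) i - ∑ i, ewWeight K η xhat t i ≤
      (∑ i, ewWeight K η xhat t i) / (1 - γ) *
        (η * ∑ i, ewMixedProb K γ η xhat t i * xhat t i +
          (exp 1 - 2) * η ^ 2 * ∑ i, ewMixedProb K γ η xhat t i * xhat t i ^ 2) := by
  set W := ∑ i, ewWeight K η xhat t i
  have he : 0 < exp 1 - 2 := by linarith [exp_one_gt_d9]
  calc ∑ i, ewWeight K η xhat (t + 1) i - W
      = ∑ i, ewWeight K η xhat t i * (exp (η * xhat t i) - 1) := by
        simp only [W, ← sum_sub_distrib, mul_sub, mul_one]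
        rfl
    _ ≤ ∑ i, ewWeight K η xhat t i * (η * xhat t i + (exp 1 - 2) * (η * xhat t i) ^ 2) := by
        gcongr with i
        · exact (ewWeight_pos t i).le
        · linarith [exp_le_one_add_add_mul_sq (mul_nonneg hη (hx0 i)) (hx1 i)]
    _ ≤ ∑ i, W / (1 - γ) * ewMixedProb K γ η xhat t i *
          (η * xhat t i + (exp 1 - 2) * (η * xhat t i) ^ 2) := by
        gcongr with i
        · exact add_nonneg (mul_nonneg hη (hx0 i)) (mul_nonneg he.le (sq_nonneg _))
        · exact ewWeight_le_mul_ewMixedProb hγ0 hγ1 t i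
    _ = _ := by
        simp only [mul_sum, ← sum_add_distrib]
        exact sum_congr rfl fun i _ ↦ by ring

theorem log_sum_ewWeight_succ_sub_le [NeZero K] (hγ0 : 0 ≤ γ) (hγ1 : γ < 1) (hη : 0 ≤ η)
    {t : ℕ} (hx0 : ∀ i, 0 ≤ xhat t i) (hx1 : ∀ i, η * xhat t i ≤ 1) :
    log (∑ i, ewWeight K η xhat (t + 1) i) - log (∑ i, ewWeight K η xhat t i) ≤
      (η * ∑ i, ewMixedProb K γ η xhat t i * xhat t i +
        (exp 1 - 2) * η ^ 2 * ∑ i, ewMixedProb K γ η xhat t i * xhat t i ^ 2) / (1 - γ) := by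
  have hW := sum_ewWeight_pos (η := η) (xhat := xhat) t
  have hW' := sum_ewWeight_pos (η := η) (xhat := xhat) (t + 1)
  calc _ = log ((∑ i, ewWeight K η xhat (t + 1) i) / ∑ i, ewWeight K η xhat t i) :=
        (log_div hW'.ne' hW.ne').symm
    _ ≤ (∑ i, ewWeight K η xhat (t + 1) i) / (∑ i, ewWeight K η xhat t i) - 1 :=
        log_le_sub_one_of_pos (div_pos hW' hW)
    _ ≤ _ := by
        rw [div_sub_one hW.ne', div_le_iff₀ hW]
        exact (sum_ewWeight_succ_sub_le hγ0 hγ1 hη hx0 hx1).trans_eq (by ring)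

theorem log_sum_ewWeight_sub_log_le [NeZero K] (hγ0 : 0 ≤ γ) (hγ1 : γ < 1) (hη : 0 ≤ η)
    {T : ℕ} (hx0 : ∀ t < T, ∀ i, 0 ≤ xhat t i) (hx1 : ∀ t < T, ∀ i, η * xhat t i ≤ 1) :
    log (∑ i, ewWeight K η xhat T i) - log K ≤
      (η * ∑ t ∈ range T, ∑ i, ewMixedProb K γ η xhat t i * xhat t i +
        (exp 1 - 2) * η ^ 2 * ∑ t ∈ range T, ∑ i, ewMixedProb K γ η xhat t i * xhat t i ^ 2) /
        (1 - γ) := by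
  rw [← sum_ewWeight_zero (η := η) (xhat := xhat),
    ← sum_range_sub (fun t ↦ log (∑ i, ewWeight K η xhat t i)), mul_sum, mul_sum,
    ← sum_add_distrib, sum_div]
  exact sum_le_sum fun t ht ↦ log_sum_ewWeight_succ_sub_le hγ0 hγ1 hη
    (hx0 t (mem_range.mp ht)) (hx1 t (mem_range.mp ht))

theorem mul_sum_le_log_sum_ewWeight (T : ℕ) (j : Fin K) :
    η * ∑ t ∈ range T, xhat t j ≤ log (∑ i, ewWeight K η xhat T i) := by
  rw [← log_exp (η * _), ← ewWeight_eq_exp_sum]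
  exact log_le_log (ewWeight_pos T j) (single_le_sum (fun i _ ↦ (ewWeight_pos T i).le) (mem_univ j))

end ExpWeights

theorem ew_mixed_regret_general (K T : ℕ) (hK : 1 ≤ K)
    (γ : ℝ) (hγ0 : 0 < γ) (hγ1 : γ < 1)
    (η : ℝ) (hη : 0 < η)
    (xhat : ℕ → Fin K → ℝ)
    (hx0 : ∀ t < T, ∀ i, 0 ≤ xhat t i)
    (hx1 : ∀ t < T, ∀ i, η * xhat t i ≤ 1)
    (j : Fin K) :
    ∑ t ∈ Finset.range T, xhat t j -
        ∑ t ∈ Finset.range T, ∑ i, ewMixedProb K γ η xhat t i * xhat t i ≤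
      γ * ∑ t ∈ Finset.range T, xhat t j +
        (Real.exp 1 - 2) * η *
          ∑ t ∈ Finset.range T, ∑ i, ewMixedProb K γ η xhat t i * xhat t i ^ 2 +
        Real.log K / η := by
  have : NeZero K := ⟨by omega⟩
  set G := ∑ t ∈ range T, xhat t j
  set S := ∑ t ∈ range T, ∑ i, ewMixedProb K γ η xhat t i * xhat t i
  set Q := ∑ t ∈ range T, ∑ i, ewMixedProb K γ η xhat t i * xhat t i ^ 2
  have hlogK : 0 ≤ log K := log_nonneg (by exact_mod_cast hK)
  have potential : (1 - γ) * (η * G - log K) ≤ η * S + (exp 1 - 2) * η ^ 2 * Q := by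
    rw [← le_div_iff₀' (sub_pos.mpr hγ1)]
    linarith [mul_sum_le_log_sum_ewWeight (η := η) (xhat := xhat) T j,
      log_sum_ewWeight_sub_log_le hγ0.le hγ1 hη.le hx0 hx1]
  rw [← sub_nonneg]
  have hgap : γ * G + (exp 1 - 2) * η * Q + log K / η - (G - S) =
      (η * S + (exp 1 - 2) * η ^ 2 * Q - (1 - γ) * (η * G - log K) + γ * log K) / η := by
    field_simp
    ring
  rw [hgap]
  exact div_nonneg (add_nonneg (sub_nonneg.mpr potential) (mul_nonneg hγ0.le hlogK)) hη.le

/-- deterministic regret guarantee of the exponential-weights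
update with uniform mixing `γ`: for nonnegative estimated rewards `x̂ t i`
with `η·x̂ t i ≤ 1`, and for every `j`,
`∑_t x̂ t j − ∑_t ∑_i p t i·x̂ t i
   ≤ γ·∑_t x̂ t j + (e−2)·η·∑_t ∑_i p t i·(x̂ t i)² + (ln K)/η`.
(Rounds `t = 1,…,T` are indexed by `t ∈ range T`.) -/
theorem ew_mixed_regret (K T : ℕ) (hK : 1 ≤ K) (hT : 1 ≤ T)
    (γ : ℝ) (hγ0 : 0 < γ) (hγ1 : γ < 1)
    (η : ℝ) (hη : 0 < η)
    (xhat : ℕ → Fin K → ℝ)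
    (hx0 : ∀ t < T, ∀ i, 0 ≤ xhat t i)
    (hx1 : ∀ t < T, ∀ i, η * xhat t i ≤ 1)
    (j : Fin K) :
    ∑ t ∈ Finset.range T, xhat t j -
        ∑ t ∈ Finset.range T, ∑ i, ewMixedProb K γ η xhat t i * xhat t i ≤
      γ * ∑ t ∈ Finset.range T, xhat t j +
        (Real.exp 1 - 2) * η *
          ∑ t ∈ Finset.range T, ∑ i, ewMixedProb K γ η xhat t i * xhat t i ^ 2 +
        Real.log K / η :=
  ew_mixed_regret_general K T hK γ hγ0 hγ1 η hη xhat hx0 hx1 j
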